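/- Let R = F_2[x^{±1}, y^{±1}] with antipode involution f ↦ f̄ determined by x ↦ x^{-1}, y ↦ y^{-1}. Define the F_2-linear functional π on the F_2-subspace V = {f ∈ R : f = x·y·f̄} spanned by the elements E_{m,n} = x^m y^n + x^{1-m} y^{1-n}, by π(Σ α_{m,n} E_{m,n}) = Σ α_{m,n} mod 2 (sum over representatives of pairs {(m,n),(1-m,1-n)}). Then π is well defined, and for every p with p = y·p̄ and every q with q = x·q̄, one has (1+x)p + (1+y)q ∈ V and π((1+x)p + (1+y)q) = 0, while π(x^a y^b + x^{1-a} y^{1-b}) = 1 for all integers a, b. -/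

import Mathlib

open AddMonoidAlgebra

/-- The Laurent polynomial ring `R = F₂[x^{±1}, y^{±1}]`, realized as the group algebra
of `ℤ × ℤ` over `F₂`; the monomial `x^a y^b` corresponds to `single (a, b) 1`. -/
abbrev R2 : Type := AddMonoidAlgebra (ZMod 2) (ℤ × ℤ)

/-- The monomial `x^a y^b` in `R2`. -/
noncomputable def mono (a b : ℤ) : R2 := AddMonoidAlgebra.single (a, b) 1

/-- The antipode map `x ↦ x⁻¹`, `y ↦ y⁻¹`, the `F₂`-algebra involution induced by
negation on the exponent group `ℤ × ℤ`. -/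
noncomputable def bar (f : R2) : R2 :=
  AddMonoidAlgebra.domCongr (ZMod 2) (ZMod 2) (AddEquiv.neg (ℤ × ℤ)) f

/-- `E_{m,n} = x^m y^n + x^{1-m} y^{1-n}`. -/
noncomputable def Emn (m n : ℤ) : R2 := mono m n + mono (1 - m) (1 - n)

/-- The subspace `V = {f ∈ R : f = x·y·f̄}` (as a set). -/
noncomputable def Vset : Set R2 := {f : R2 | f = mono 1 0 * mono 0 1 * bar f}

/-!
Take `π f = ∑ₖ f_k w(k)`, where `w` is the indicator of a fundamental domain for the point
reflection `k ↦ (1, 1) - k`. Since `w k + w ((1, 1) - k) = 1`, for every `g` we get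
`π (g + x y ḡ) = ε g`, the sum of the coefficients of `g`. Each `E_{m,n}` is of this form with
`g = x^m y^n`, so `π E_{m,n} = 1`. If `p = y p̄` and `q = x q̄`, then `(1 + x) p = p + x y p̄` and
`(1 + y) q = q + x y q̄`, so `(1 + x) p + (1 + y) q = g + x y ḡ` with `g = p + q`; such elements
lie in `V`, and `π` of it is `ε p + ε q`. Finally `ε p = 0` in `F₂`, because the coefficients of `p`
are invariant under the fixed-point-free involution `k ↦ (0, 1) - k`; likewise for `q`.
-/

section WeightFunctional

variable {k G : Type*}

noncomputable def weightFunctional [CommSemiring k] (w : G → k) : k[G] →ₗ[k] k :=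
  (Finsupp.linearCombination k w).comp (coeffLinearEquiv k).toLinearMap

theorem weightFunctional_apply [CommSemiring k] (w : G → k) (f : k[G]) :
    weightFunctional w f = f.coeff.sum fun g a => a * w g := by
  simp [weightFunctional, Finsupp.linearCombination_apply]

theorem weightFunctional_single [CommSemiring k] (w : G → k) (g : G) (a : k) :
    weightFunctional w (single g a) = a * w g := by
  simp [weightFunctional_apply, coeff_single]

theorem weightFunctional_single_mul_domCongr_neg [CommSemiring k] [AddCommGroup G] (w : G → k)
    (c : G) (f : k[G]) :
    weightFunctional w (single c 1 * domCongr k k (AddEquiv.neg G) f) =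
      weightFunctional (fun g => w (c - g)) f := by
  induction f using induction_linear with
  | zero => simp
  | add f₁ f₂ h₁ h₂ => rw [map_add, mul_add, map_add, h₁, h₂, map_add]
  | single g a => simp [domCongr_single, weightFunctional_single, sub_eq_add_neg]

theorem weightFunctional_add_single_mul_domCongr_neg [CommSemiring k] [AddCommGroup G]
    {w : G → k} {c : G} (hw : ∀ g, w g + w (c - g) = 1) (f : k[G]) :
    weightFunctional w (f + single c 1 * domCongr k k (AddEquiv.neg G) f) =
      weightFunctional 1 f := by
  rw [map_add, weightFunctional_single_mul_domCongr_neg, weightFunctional_apply,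
    weightFunctional_apply, weightFunctional_apply, ← Finsupp.sum_add]
  simp only [← mul_add, hw, Pi.one_apply]

theorem weightFunctional_one_eq_zero_of_involutive [CommRing k] [CharP k 2] {σ : G → G}
    (hσ : Function.Involutive σ) (hσ_ne : ∀ g, σ g ≠ g) {f : k[G]}
    (hf : ∀ g, f.coeff (σ g) = f.coeff g) : weightFunctional 1 f = 0 := by
  rw [weightFunctional_apply, Finsupp.sum]
  refine Finset.sum_involution (fun g _ => σ g) (fun g _ => ?_) (fun g _ _ => hσ_ne g)
    (fun g hg => by simpa [hf] using hg) (fun g _ => hσ g)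
  simp [hf, CharTwo.add_self_eq_zero]

end WeightFunctional

theorem coeff_bar (f : R2) (g : ℤ × ℤ) : (bar f).coeff g = f.coeff (-g) := by
  simp [bar, coeff_domCongr]

theorem bar_add (f g : R2) : bar (f + g) = bar f + bar g := map_add _ f g

theorem bar_mul (f g : R2) : bar (f * g) = bar f * bar g := map_mul _ f g

theorem bar_bar (f : R2) : bar (bar f) = f := by
  ext g
  simp [coeff_bar]

theorem bar_mono (a b : ℤ) : bar (mono a b) = mono (-a) (-b) := by
  simp [bar, mono, domCongr_single]

theorem mono_mul_mono (a b c d : ℤ) : mono a b * mono c d = mono (a + c) (b + d) := by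
  simp [mono, single_mul_single]

theorem coeff_sub_of_eq_mono_mul_bar {a b : ℤ} {p : R2} (hp : p = mono a b * bar p)
    (g : ℤ × ℤ) : p.coeff ((a, b) - g) = p.coeff g := by
  conv_rhs => rw [hp]
  rw [mono, coeff_single_mul_apply, coeff_bar, one_mul, neg_add, neg_neg, sub_eq_add_neg,
    add_comm]

theorem one_add_mono_mul_of_eq_mono_mul_bar {a b : ℤ} {p : R2} (hp : p = mono a b * bar p)
    (c d : ℤ) : (1 + mono c d) * p = p + mono (c + a) (d + b) * bar p := by
  conv_lhs => rw [add_mul, one_mul, hp, ← mul_assoc, mono_mul_mono]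
  rw [← hp]

theorem mono_zero_zero : mono 0 0 = 1 := rfl

theorem add_mono_mul_bar_mem_Vset (g : R2) : g + mono 1 1 * bar g ∈ Vset := by
  show _ = _
  rw [mono_mul_mono, bar_add, bar_mul, bar_bar, bar_mono, mul_add, ← mul_assoc, mono_mul_mono]
  simp [add_comm, mono_zero_zero]

theorem weightFunctional_one_eq_zero_of_eq_mono_mul_bar {a b : ℤ} (hab : Odd a ∨ Odd b)
    {p : R2} (hp : p = mono a b * bar p) : weightFunctional 1 p = 0 := by
  refine weightFunctional_one_eq_zero_of_involutive (σ := ((a, b) - ·))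
    (fun g => sub_sub_cancel _ g) (fun g hg => ?_) (coeff_sub_of_eq_mono_mul_bar hp)
  have h₁ := congrArg Prod.fst hg
  have h₂ := congrArg Prod.snd hg
  simp only [Prod.fst_sub, Prod.snd_sub] at h₁ h₂
  rcases hab with ⟨r, hr⟩ | ⟨r, hr⟩ <;> omega

/-- Indicator of a fundamental domain for the point reflection `k ↦ (1, 1) - k` of `ℤ × ℤ`,
so that it picks one exponent out of each pair `{(m, n), (1 - m, 1 - n)}`. -/
def parityWeight (k : ℤ × ℤ) : ZMod 2 :=
  if 1 < k.1 + k.2 ∨ (k.1 + k.2 = 1 ∧ 1 ≤ k.1) then 1 else 0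

theorem parityWeight_add_parityWeight_sub (k : ℤ × ℤ) :
    parityWeight k + parityWeight ((1, 1) - k) = 1 := by
  obtain ⟨m, n⟩ := k
  simp only [parityWeight, Prod.mk_sub_mk]
  split_ifs <;> first | rfl | omega

theorem parityWeight_add_mono_mul_bar (g : R2) :
    weightFunctional parityWeight (g + mono 1 1 * bar g) = weightFunctional 1 g :=
  weightFunctional_add_single_mul_domCongr_neg parityWeight_add_parityWeight_sub g

/-- There is a well-defined `F₂`-linear functional `π` with `π(E_{m,n}) = 1` for all `m, n`
(so in particular `π(x^a y^b + x^{1-a} y^{1-b}) = 1`), such that for all `p = y·p̄` and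
`q = x·q̄` the element `(1+x)p + (1+y)q` lies in `V` and has `π = 0`. -/
theorem parity_functional_exists :
    ∃ π : R2 →ₗ[ZMod 2] ZMod 2,
      (∀ m n : ℤ, π (Emn m n) = 1) ∧
      (∀ a b : ℤ, π (mono a b + mono (1 - a) (1 - b)) = 1) ∧
      (∀ p q : R2, p = mono 0 1 * bar p → q = mono 1 0 * bar q →
        (1 + mono 1 0) * p + (1 + mono 0 1) * q ∈ Vset ∧
        π ((1 + mono 1 0) * p + (1 + mono 0 1) * q) = 0) := by
  have hE (a b : ℤ) : weightFunctional parityWeight (mono a b + mono (1 - a) (1 - b)) = 1 := by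
    rw [sub_eq_add_neg, sub_eq_add_neg, ← mono_mul_mono, ← bar_mono,
      parityWeight_add_mono_mul_bar, mono, weightFunctional_single, one_mul, Pi.one_apply]
  refine ⟨weightFunctional parityWeight, hE, hE, fun p q hp hq => ?_⟩
  have hpq : (1 + mono 1 0) * p + (1 + mono 0 1) * q = (p + q) + mono 1 1 * bar (p + q) := by
    rw [one_add_mono_mul_of_eq_mono_mul_bar hp, one_add_mono_mul_of_eq_mono_mul_bar hq,
      bar_add, mul_add, add_zero, zero_add]
    abel
  rw [hpq, parityWeight_add_mono_mul_bar, map_add,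
    weightFunctional_one_eq_zero_of_eq_mono_mul_bar (.inr odd_one) hp,
    weightFunctional_one_eq_zero_of_eq_mono_mul_bar (.inl odd_one) hq, add_zero]
  exact ⟨add_mono_mul_bar_mem_Vset _, rfl⟩
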